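/- arXiv:1811.11464 — 3 statements merged into one kernel-verified Lean document; each statement's English description precedes it below -/
import Mathlib

section
/- Let G and H be finitely generated groups and π : G → H a surjective group homomorphism. Then π(G_bound) ⊆ H_bound. -/
/-!
Given a finite symmetric generating set `T` of `H`, lift `T` along `π` and add, for each
generator `x` of `G`, the kernel element `x * y⁻¹`, where `y` lies in the subgroup generated
by the lifts and `π y = π x`. Symmetrising gives a finite symmetric generating set `S` of `G` with
`π(S) ⊆ T ∪ {1}`, so applying `π` to a word in `S` and dropping the letters `1` shows
`l_T(π g) ≤ l_S(g)`.
-/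

/-- A finite symmetric generating set of a group. -/
def IsSymmGen {G : Type*} [Group G] (S : Finset G) : Prop :=
  (∀ s ∈ S, s⁻¹ ∈ S) ∧ Subgroup.closure (S : Set G) = ⊤

/-- The word length of `g` with respect to `S`: the least `n` such that
`g` is a product of `n` elements of `S`. -/
noncomputable def wordLen {G : Type*} [Group G] (S : Finset G) (g : G) : ℕ :=
  sInf {n : ℕ | ∃ w : List G, (∀ s ∈ w, s ∈ S) ∧ w.length = n ∧ w.prod = g}

/-- Elements of uniformly bounded word length. -/
def GBound (G : Type*) [Group G] : Set G :=
  {g | ∃ M : ℕ, 0 < M ∧ ∀ S : Finset G, IsSymmGen S → wordLen S g ≤ M}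

open scoped Pointwise

section WordLength

variable {G H : Type*} [Group G] [Group H]

lemma IsSymmGen.exists_list_prod_eq {S : Finset G} (hS : IsSymmGen S) (g : G) :
    ∃ w : List G, (∀ s ∈ w, s ∈ S) ∧ w.prod = g := by
  have hg : g ∈ (Subgroup.closure (S : Set G)).toSubmonoid := by
    rw [hS.2]; trivial
  have hsymm : (S : Set G)⁻¹ ⊆ S := fun s hs => by simpa using hS.1 _ hs
  rw [Subgroup.closure_toSubmonoid, Set.union_eq_left.mpr hsymm] at hg
  exact Submonoid.exists_list_of_mem_closure hg

lemma wordLen_le_length {S : Finset G} {w : List G} (hw : ∀ s ∈ w, s ∈ S) :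
    wordLen S w.prod ≤ w.length :=
  Nat.sInf_le ⟨w, hw, rfl, rfl⟩

lemma IsSymmGen.exists_list_length_eq_wordLen {S : Finset G} (hS : IsSymmGen S) (g : G) :
    ∃ w : List G, (∀ s ∈ w, s ∈ S) ∧ w.length = wordLen S g ∧ w.prod = g := by
  obtain ⟨w, hw, rfl⟩ := hS.exists_list_prod_eq g
  have hne : {n : ℕ | ∃ v : List G, (∀ s ∈ v, s ∈ S) ∧ v.length = n ∧ v.prod = w.prod}.Nonempty :=
    ⟨w.length, w, hw, rfl, rfl⟩
  exact Nat.sInf_mem hne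

lemma wordLen_map_le (π : G →* H) {S : Finset G} (hS : IsSymmGen S) {T : Finset H}
    (hST : ∀ s ∈ S, π s = 1 ∨ π s ∈ T) (g : G) :
    wordLen T (π g) ≤ wordLen S g := by
  classical
  obtain ⟨w, hw, hlen, rfl⟩ := hS.exists_list_length_eq_wordLen g
  set w' := (w.map π).filter (· != 1)
  have hw' : ∀ t ∈ w', t ∈ T := by
    intro t ht
    obtain ⟨hmem, hne⟩ := List.mem_filter.mp ht
    obtain ⟨s, hs, rfl⟩ := List.mem_map.mp hmem
    exact (hST s (hw s hs)).resolve_left (bne_iff_ne.mp hne)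
  calc wordLen T (π w.prod) = wordLen T w'.prod := by
        rw [List.prod_filter_bne_one, map_list_prod]
    _ ≤ w'.length := wordLen_le_length hw'
    _ ≤ (w.map π).length := List.length_filter_le _ _
    _ = wordLen S w.prod := by rw [List.length_map, hlen]

end WordLength

section Lifting

variable {G H : Type*} [Group G] [Group H]

lemma isSymmGen_union_inv [DecidableEq G] {A : Finset G}
    (hA : Subgroup.closure (A : Set G) = ⊤) : IsSymmGen (A ∪ A⁻¹) := by
  refine ⟨fun s hs => ?_, top_le_iff.mp (hA ▸ Subgroup.closure_mono ?_)⟩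
  · simp only [Finset.mem_union, Finset.mem_inv', inv_inv] at hs ⊢
    exact hs.symm
  · simp

lemma exists_generating_finset_map_subset [Group.FG G] {π : G →* H}
    (hπ : Function.Surjective π) {T : Finset H} (hT : Subgroup.closure (T : Set H) = ⊤) :
    ∃ A : Finset G, Subgroup.closure (A : Set G) = ⊤ ∧ ∀ a ∈ A, π a = 1 ∨ π a ∈ T := by
  classical
  obtain ⟨X, hX⟩ := Group.fg_def.mp ‹Group.FG G›
  set L := T.image (Function.surjInv hπ)
  have hL : (Subgroup.closure (L : Set G)).map π = ⊤ := by
    rw [MonoidHom.map_closure, Finset.coe_image,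
      (Function.rightInverse_surjInv hπ).image_image, hT]
  have hlift : ∀ x : G, ∃ y ∈ Subgroup.closure (L : Set G), π y = π x := fun x =>
    Subgroup.mem_map.mp (hL ▸ Subgroup.mem_top (π x))
  choose y hyL hπy using hlift
  set K := X.image fun x => x * (y x)⁻¹
  refine ⟨L ∪ K, ?_, fun a ha => ?_⟩
  · rw [eq_top_iff, ← hX, Subgroup.closure_le]
    intro x hx
    have hker : x * (y x)⁻¹ ∈ Subgroup.closure (↑(L ∪ K) : Set G) :=
      Subgroup.subset_closure (Finset.mem_union_right _ (Finset.mem_image_of_mem _ hx))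
    have hy : y x ∈ Subgroup.closure (↑(L ∪ K) : Set G) :=
      Subgroup.closure_mono (by simp) (hyL x)
    simpa using mul_mem hker hy
  · rcases Finset.mem_union.mp ha with ha | ha
    · obtain ⟨t, ht, rfl⟩ := Finset.mem_image.mp ha
      exact Or.inr (by rwa [Function.surjInv_eq hπ])
    · obtain ⟨x, -, rfl⟩ := Finset.mem_image.mp ha
      exact Or.inl (by rw [map_mul, map_inv, hπy, mul_inv_cancel])

lemma exists_isSymmGen_map_subset [Group.FG G] {π : G →* H} (hπ : Function.Surjective π)
    {T : Finset H} (hT : IsSymmGen T) :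
    ∃ S : Finset G, IsSymmGen S ∧ ∀ s ∈ S, π s = 1 ∨ π s ∈ T := by
  classical
  obtain ⟨A, hA, hAT⟩ := exists_generating_finset_map_subset hπ hT.2
  refine ⟨A ∪ A⁻¹, isSymmGen_union_inv hA, fun s hs => ?_⟩
  rcases Finset.mem_union.mp hs with hs | hs
  · exact hAT s hs
  · rcases hAT _ (Finset.mem_inv'.mp hs) with h | h
    · exact Or.inl (by rwa [map_inv, inv_eq_one] at h)
    · exact Or.inr (by simpa using hT.1 _ h)

end Lifting

theorem stmt1_general (G H : Type*) [Group G] [Group H] [Group.FG G]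
    (π : G →* H) (hπ : Function.Surjective π) :
    π '' GBound G ⊆ GBound H := by
  rintro _ ⟨g, ⟨M, hM, hg⟩, rfl⟩
  refine ⟨M, hM, fun T hT => ?_⟩
  obtain ⟨S, hS, hST⟩ := exists_isSymmGen_map_subset hπ hT
  exact (wordLen_map_le π hS hST g).trans (hg S hS)

/-- If `π : G → H` is a surjective homomorphism of finitely generated groups,
then `π(G_bound) ⊆ H_bound`. -/
theorem stmt1 (G H : Type*) [Group G] [Group H] [Group.FG G] [Group.FG H]
    (π : G →* H) (hπ : Function.Surjective π) :
    π '' GBound G ⊆ GBound H :=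
  stmt1_general G H π hπ
end

section
/- Let q > 1 be an integer and G = ℤ × ℤ/qℤ. Then G_bound is trivial: for every nonidentity element g of G and every constant M > 0 there exists a finite symmetric generating set S of G with l_S(g) > M. -/
/-!
Take a prime `p` larger than `|a|`, `q` and `2M + 1`, and `S = {±(p, 0), ±(t, 1)}` with `p ∤ t`;
by Bézout `S` generates `ℤ × ℤ/qℤ`. A word of length `n` in `S` sums to `(p x + t y, y)` with
`|x| + |y| ≤ n`, so reaching `g = (a, b)` forces `t y ≡ a (mod p)`. Since `t` is invertible mod `p`,
this pins `y` to one residue class mod `p`, and `t` can be chosen so that this class is `0` when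
`p ∣ a` and `M + 1` otherwise. In both cases `|y| ≤ M` forces `y = 0`, so `b = 0` and
`a = p x` with `|a| < p`, i.e. `g = 0`.
-/

/-- A finite symmetric generating set of an additive group. -/
def IsSymmGenAdd {G : Type*} [AddGroup G] (S : Finset G) : Prop :=
  (∀ s ∈ S, -s ∈ S) ∧ AddSubgroup.closure (S : Set G) = ⊤

/-- The word length of `g` with respect to `S`: the least `n` such that
`g` is a sum of `n` elements of `S`. -/
noncomputable def addWordLen {G : Type*} [AddGroup G] (S : Finset G) (g : G) : ℕ :=
  sInf {n : ℕ | ∃ w : List G, (∀ s ∈ w, s ∈ S) ∧ w.length = n ∧ w.sum = g}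

/-- Elements of uniformly bounded word length. -/
def AddGBound (G : Type*) [AddGroup G] : Set G :=
  {g | ∃ M : ℕ, 0 < M ∧ ∀ S : Finset G, IsSymmGenAdd S → addWordLen S g ≤ M}

section WordLength

variable {G : Type*} [AddGroup G] {S : Finset G}

lemma IsSymmGenAdd.exists_list_sum_eq (hS : IsSymmGenAdd S) (g : G) :
    ∃ w : List G, (∀ s ∈ w, s ∈ S) ∧ w.sum = g := by
  have hg : g ∈ AddSubgroup.closure (S : Set G) := hS.2 ▸ AddSubgroup.mem_top g
  induction hg using AddSubgroup.closure_induction'' with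
  | mem s hs => exact ⟨[s], by simpa using hs, by simp⟩
  | neg_mem s hs => exact ⟨[-s], by simpa using hS.1 s hs, by simp⟩
  | zero => exact ⟨[], by simp, rfl⟩
  | add g h _ _ ihg ihh =>
    obtain ⟨u, hu, rfl⟩ := ihg
    obtain ⟨v, hv, rfl⟩ := ihh
    exact ⟨u ++ v, fun s hs => (List.mem_append.mp hs).elim (hu s) (hv s), List.sum_append⟩

lemma IsSymmGenAdd.le_addWordLen (hS : IsSymmGenAdd S) {g : G} {n : ℕ}
    (h : ∀ w : List G, (∀ s ∈ w, s ∈ S) → w.sum = g → n ≤ w.length) :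
    n ≤ addWordLen S g := by
  obtain ⟨w, hwS, hw⟩ := hS.exists_list_sum_eq g
  refine le_csInf ⟨w.length, w, hwS, rfl, hw⟩ ?_
  rintro _ ⟨w, hwS, rfl, hw⟩
  exact h w hwS hw

lemma isSymmGenAdd_of_closure_pair_eq_top [DecidableEq G] {u v : G}
    (h : AddSubgroup.closure ({u, v} : Set G) = ⊤) : IsSymmGenAdd {u, -u, v, -v} := by
  refine ⟨?_, top_le_iff.mp (h ▸ AddSubgroup.closure_mono ?_)⟩
  · simp only [Finset.mem_insert, Finset.mem_singleton]
    rintro s (rfl | rfl | rfl | rfl) <;> simp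
  · intro s hs
    rcases hs with rfl | rfl <;> simp

end WordLength

lemma exists_sum_eq_zsmul_add_zsmul {G : Type*} [AddCommGroup G] [DecidableEq G] {u v : G}
    (w : List G) (hw : ∀ s ∈ w, s ∈ ({u, -u, v, -v} : Finset G)) :
    ∃ x y : ℤ, w.sum = x • u + y • v ∧ |x| + |y| ≤ w.length := by
  induction w with
  | nil => exact ⟨0, 0, by simp, by simp⟩
  | cons s w ih =>
    obtain ⟨x, y, hsum, hlen⟩ := ih fun s hs => hw s (List.mem_cons_of_mem _ hs)
    obtain ⟨dx, dy, rfl, hd⟩ : ∃ dx dy : ℤ, s = dx • u + dy • v ∧ |dx| + |dy| ≤ 1 := by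
      have hs := hw s List.mem_cons_self
      simp only [Finset.mem_insert, Finset.mem_singleton] at hs
      rcases hs with rfl | rfl | rfl | rfl
      exacts [⟨1, 0, by simp, by simp⟩, ⟨-1, 0, by simp, by simp⟩,
        ⟨0, 1, by simp, by simp⟩, ⟨0, -1, by simp, by simp⟩]
    refine ⟨dx + x, dy + y, by rw [List.sum_cons, hsum, add_zsmul, add_zsmul]; abel, ?_⟩
    have := abs_add_le dx x
    have := abs_add_le dy y
    rw [List.length_cons]
    push_cast
    linarith

lemma closure_pair_eq_top {q : ℕ} {m t : ℤ} (hmt : IsCoprime m (q * t)) :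
    AddSubgroup.closure ({(m, 0), (t, 1)} : Set (ℤ × ZMod q)) = ⊤ := by
  set H := AddSubgroup.closure ({(m, 0), (t, 1)} : Set (ℤ × ZMod q))
  have hm : ((m, 0) : ℤ × ZMod q) ∈ H := AddSubgroup.subset_closure (by simp)
  have ht : ((t, 1) : ℤ × ZMod q) ∈ H := AddSubgroup.subset_closure (by simp)
  obtain ⟨u, v, huv⟩ := hmt
  have h1 : ((1, 0) : ℤ × ZMod q) ∈ H := by
    have : ((1, 0) : ℤ × ZMod q) = u • (m, 0) + (v * q) • (t, 1) := by
      ext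
      · simp only [Prod.fst_add, Prod.smul_fst, smul_eq_mul, ← huv]
        ring
      · simp
    exact this ▸ add_mem (zsmul_mem hm u) (zsmul_mem ht _)
  refine eq_top_iff.mpr fun ⟨a, b⟩ _ => ?_
  obtain ⟨k, rfl⟩ := ZMod.intCast_surjective b
  have : ((a, k) : ℤ × ZMod q) = (a - t * k) • (1, 0) + k • (t, 1) := by
    ext
    · simp only [Prod.fst_add, Prod.smul_fst, smul_eq_mul]
      ring
    · simp
  exact this ▸ add_mem (zsmul_mem h1 _) (zsmul_mem ht k)

lemma exists_forall_dvd_mul_sub_eq_zero {p : ℕ} [Fact p.Prime] (a : ℤ) {M : ℕ}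
    (hM : 2 * M + 1 < p) :
    ∃ t : ℤ, ¬ (p : ℤ) ∣ t ∧ ∀ y : ℤ, (p : ℤ) ∣ t * y - a → |y| ≤ M → y = 0 := by
  by_cases ha : (a : ZMod p) = 0
  · refine ⟨1, ?_, fun y hy hyM => Int.eq_zero_of_abs_lt_dvd (m := p) ?_ (by omega)⟩
    · exact Int.natCast_dvd_ofNat.not.mpr (Nat.Prime.not_dvd_one Fact.out)
    · simpa using (ZMod.intCast_zmod_eq_zero_iff_dvd a p).mp ha |>.add hy
  · have hM1 : ((M + 1 : ℤ) : ZMod p) ≠ 0 := by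
      rw [Ne, ZMod.intCast_zmod_eq_zero_iff_dvd]
      exact fun h => absurd (Int.le_of_dvd (by omega) h) (by omega)
    obtain ⟨t, ht⟩ := ZMod.intCast_surjective (n := p) (a / (M + 1 : ℤ))
    refine ⟨t, ?_, fun y hy hyM => ?_⟩
    · rw [← ZMod.intCast_zmod_eq_zero_iff_dvd, ht]
      exact div_ne_zero ha hM1
    -- `t ≡ a / (M + 1)` is a unit mod `p`, so `t y ≡ a` pins `y ≡ M + 1`.
    have hy' : (y : ZMod p) = (M + 1 : ℤ) := by
      rw [← ZMod.intCast_eq_intCast_iff_dvd_sub, Int.cast_mul, ht, div_mul_eq_mul_div,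
        eq_div_iff hM1] at hy
      exact mul_left_cancel₀ ha (by rw [hy, mul_comm])
    have := Int.eq_zero_of_abs_lt_dvd ((ZMod.intCast_eq_intCast_iff_dvd_sub _ _ _).mp hy')
      (by rw [abs_lt]; constructor <;> linarith [abs_le.mp hyM])
    linarith [le_abs_self y]

/-- For `G = ℤ × ℤ/qℤ` with `q > 1`, `G_bound` is trivial: every non-identity
element has unbounded word length over symmetric generating sets. -/
theorem stmt3 (q : ℕ) (hq : 1 < q) :
    ∀ g : ℤ × ZMod q, g ≠ 0 → ∀ M : ℕ, 0 < M →
      ∃ S : Finset (ℤ × ZMod q), IsSymmGenAdd S ∧ M < addWordLen S g := by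
  rintro ⟨a, b⟩ hg M -
  obtain ⟨p, hp_large, hp⟩ := Nat.exists_infinite_primes (a.natAbs + q + 2 * M + 2)
  have : Fact p.Prime := ⟨hp⟩
  obtain ⟨t, hpt, hkey⟩ := exists_forall_dvd_mul_sub_eq_zero (p := p) a (M := M) (by omega)
  have hcop : IsCoprime (p : ℤ) (q * t) := by
    refine (Nat.prime_iff_prime_int.mp hp).coprime_iff_not_dvd.mpr fun h => ?_
    rcases (Nat.prime_iff_prime_int.mp hp).dvd_mul.mp h with h | h
    · exact absurd (Nat.le_of_dvd (by omega) (Int.natCast_dvd_natCast.mp h)) (by omega)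
    · exact hpt h
  have hS := isSymmGenAdd_of_closure_pair_eq_top (closure_pair_eq_top hcop)
  refine ⟨_, hS, hS.le_addWordLen (n := M + 1) fun w hw hsum => ?_⟩
  obtain ⟨x, y, hxy, hlen⟩ := exists_sum_eq_zsmul_add_zsmul w hw
  rw [hsum] at hxy
  simp only [Prod.smul_mk, smul_eq_mul, zsmul_eq_mul, mul_zero, mul_one, Prod.mk_add_mk,
    zero_add, Prod.mk.injEq] at hxy
  by_contra! hshort
  obtain rfl : y = 0 := hkey y ⟨-x, by rw [hxy.1]; ring⟩ (by have := abs_nonneg x; omega)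
  have : a = 0 := Int.eq_zero_of_abs_lt_dvd (m := p) ⟨x, by rw [hxy.1]; ring⟩
    (by rw [Int.abs_eq_natAbs]; omega)
  exact hg (by simp_all)
end

section
/- Let G be a finitely generated group. Then G_bound is contained in the FC-center FC(G): every element of G_bound has a finite conjugacy class in G. -/
/-! Conjugation by `c` carries every finite symmetric generating set `S` to another one, and
the length of `c g c⁻¹` with respect to `S` is the length of `g` with respect to `c⁻¹ S c`.
So if `g` has length at most `M` for every generating set, its whole conjugacy class lies in
the ball of radius `M` of the word metric of one fixed `S`, which is finite. -/

open Pointwise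

theorem wordLen_apply {G H : Type*} [Group G] [Group H] [DecidableEq G] (φ : G ≃* H)
    (S : Finset H) (g : G) : wordLen S (φ g) = wordLen (S.image φ.symm) g := by
  unfold wordLen
  congr 1
  ext n
  constructor
  · rintro ⟨w, hwS, rfl, hw⟩
    refine ⟨w.map φ.symm, fun s hs => ?_, List.length_map _, ?_⟩
    · obtain ⟨t, ht, rfl⟩ := List.mem_map.1 hs
      exact Finset.mem_image_of_mem _ (hwS t ht)
    · rw [← map_list_prod, hw, MulEquiv.symm_apply_apply]
  · rintro ⟨w, hwS, rfl, rfl⟩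
    refine ⟨w.map φ, fun s hs => ?_, List.length_map _, (map_list_prod φ w).symm⟩
    obtain ⟨t, ht, rfl⟩ := List.mem_map.1 hs
    obtain ⟨u, hu, rfl⟩ := Finset.mem_image.1 (hwS t ht)
    simpa using hu

theorem exists_isSymmGen (G : Type*) [Group G] [Group.FG G] : ∃ S : Finset G, IsSymmGen S := by
  classical
  obtain ⟨S, hS⟩ := Group.fg_def.1 ‹Group.FG G›
  refine ⟨S ∪ S⁻¹, fun s hs => ?_, eq_top_iff.2 ?_⟩
  · rw [Finset.mem_union, Finset.mem_inv'] at hs ⊢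
    simpa [or_comm] using hs
  · rw [← hS]
    exact Subgroup.closure_mono (by simp)

namespace IsSymmGen

variable {G : Type*} [Group G] {S : Finset G}

theorem exists_list_length_eq_wordLen_s5 (hS : IsSymmGen S) (g : G) :
    ∃ w : List G, (∀ s ∈ w, s ∈ S) ∧ w.length = wordLen S g ∧ w.prod = g := by
  have hinv : (S : Set G)⁻¹ ⊆ S := fun x hx => by simpa using hS.1 _ hx
  have hg : g ∈ Submonoid.closure (S : Set G) := by
    rw [← Set.union_eq_self_of_subset_right hinv, ← Subgroup.closure_toSubmonoid, hS.2]
    trivial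
  obtain ⟨w, hwS, hwg⟩ := Submonoid.exists_list_of_mem_closure hg
  exact Nat.sInf_mem (s := {n | ∃ w : List G, (∀ s ∈ w, s ∈ S) ∧ w.length = n ∧ w.prod = g})
    ⟨w.length, w, hwS, rfl, hwg⟩

theorem finite_setOf_wordLen_le (hS : IsSymmGen S) (M : ℕ) :
    {g | wordLen S g ≤ M}.Finite := by
  refine ((List.finite_length_le S M).image fun l => (l.map Subtype.val).prod).subset ?_
  intro g hg
  obtain ⟨w, hwS, hwlen, rfl⟩ := hS.exists_list_length_eq_wordLen_s5 g
  replace hg : w.length ≤ M := hwlen ▸ hg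
  lift w to List S using hwS
  exact ⟨w, by simpa using hg, rfl⟩

theorem image {H : Type*} [Group H] [DecidableEq H] (hS : IsSymmGen S) (φ : G ≃* H) :
    IsSymmGen (S.image φ) := by
  refine ⟨fun _ hs => ?_, ?_⟩
  · obtain ⟨s, hsS, rfl⟩ := Finset.mem_image.1 hs
    exact Finset.mem_image.2 ⟨s⁻¹, hS.1 s hsS, map_inv φ s⟩
  · rw [Finset.coe_image, ← MulEquiv.coe_toMonoidHom, ← MonoidHom.map_closure, hS.2]
    exact Subgroup.map_top_of_surjective _ φ.surjective

end IsSymmGen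

/-- `G_bound` is contained in the FC-center: every element of `G_bound` has a
finite conjugacy class. -/
theorem stmt5 (G : Type*) [Group G] [Group.FG G] :
    ∀ g ∈ GBound G, {h : G | ∃ c : G, c * g * c⁻¹ = h}.Finite := by
  classical
  rintro g ⟨M, -, hM⟩
  obtain ⟨S, hS⟩ := exists_isSymmGen G
  refine (hS.finite_setOf_wordLen_le M).subset ?_
  rintro _ ⟨c, rfl⟩
  calc wordLen S (c * g * c⁻¹)
      = wordLen (S.image (MulAut.conj c).symm) g := wordLen_apply (MulAut.conj c) S g
    _ ≤ M := hM _ (hS.image _)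
end
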